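/- For every d, t ∈ ℕ with 1 ≤ t ≤ d and every ξ ∈ 𝕋^d one has | (1/|S_t|) Σ_{x ∈ S_t} (−1)^{Σ_{i ∈ V_ξ} x_i} − (1/|S_t|) Σ_{x ∈ S_t} (−1)^{Σ_{i=1}^d x_i} | ≤ 4 · (t/d) · Σ_{i=1}^d cos²(π ξ_i). -/

import Mathlib

open Finset

noncomputable section

/-- `S_t = {x ∈ {-1,0,1}^d : Σ |x_i| = t}`. -/
def sphereS (d t : ℕ) : Finset (Fin d → ℤ) :=
  (Finset.Icc (fun _ => (-1 : ℤ)) (fun _ => (1 : ℤ))).filter fun y => ∑ i, |y i| = (t : ℤ)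

/-- `V_ξ = {i ∈ {1,…,d} : cos(2π ξ_i) < 0}`. -/
def Vset (d : ℕ) (ξ : Fin d → ℝ) : Finset (Fin d) :=
  Finset.univ.filter fun i => Real.cos (2 * Real.pi * ξ i) < 0

/-!
Flipping the signs only outside `V_ξ` changes `(-1)^{Σ x_i}` by at most `2 Σ_{i ∉ V_ξ} |x_i|`.
Since `S_t` is invariant under permutations of the coordinates, each `|x_i|` has mean `t/d` over
`S_t`, so the averaged difference is at most `2 (t/d) |V_ξᶜ|`. Finally `i ∉ V_ξ` means
`cos(2πξ_i) = 2cos²(πξ_i) - 1 ≥ 0`, so `|V_ξᶜ| ≤ 2 Σ cos²(πξ_i)`.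
-/

lemma abs_one_sub_neg_one_zpow_le (s : ℤ) : |1 - (-1 : ℝ) ^ s| ≤ 2 * |(s : ℝ)| := by
  rcases eq_or_ne s 0 with rfl | hs
  · simp
  · have hs1 : (1 : ℝ) ≤ |(s : ℝ)| := by exact_mod_cast Int.one_le_abs hs
    calc |1 - (-1 : ℝ) ^ s| ≤ |(1 : ℝ)| + |(-1 : ℝ) ^ s| := abs_sub _ _
      _ = 2 := by rw [abs_one, abs_zpow, abs_neg, abs_one, one_zpow]; norm_num
      _ ≤ 2 * |(s : ℝ)| := by linarith

lemma abs_neg_one_zpow_sum_sub_le {ι : Type*} [Fintype ι] [DecidableEq ι] (V : Finset ι)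
    (x : ι → ℤ) :
    |(-1 : ℝ) ^ (∑ i ∈ V, x i) - (-1 : ℝ) ^ (∑ i, x i)| ≤ 2 * ((∑ i ∈ Vᶜ, |x i| : ℤ) : ℝ) := by
  have hsplit : (-1 : ℝ) ^ (∑ i, x i)
      = (-1 : ℝ) ^ (∑ i ∈ V, x i) * (-1 : ℝ) ^ (∑ i ∈ Vᶜ, x i) := by
    rw [← zpow_add₀ (by norm_num), sum_add_sum_compl]
  calc |(-1 : ℝ) ^ (∑ i ∈ V, x i) - (-1 : ℝ) ^ (∑ i, x i)|
      = |1 - (-1 : ℝ) ^ (∑ i ∈ Vᶜ, x i)| := by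
        rw [hsplit, ← mul_one_sub, abs_mul, abs_zpow, abs_neg, abs_one, one_zpow, one_mul]
    _ ≤ 2 * |((∑ i ∈ Vᶜ, x i : ℤ) : ℝ)| := abs_one_sub_neg_one_zpow_le _
    _ ≤ 2 * ((∑ i ∈ Vᶜ, |x i| : ℤ) : ℝ) := by
        gcongr
        exact_mod_cast abs_sum_le_sum_abs _ _

lemma mem_sphereS {d t : ℕ} {x : Fin d → ℤ} :
    x ∈ sphereS d t ↔ (∀ i, -1 ≤ x i ∧ x i ≤ 1) ∧ ∑ i, |x i| = (t : ℤ) := by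
  simp [sphereS, Pi.le_def, forall_and]

lemma comp_perm_mem_sphereS {d t : ℕ} {x : Fin d → ℤ} (σ : Equiv.Perm (Fin d)) :
    x ∘ σ ∈ sphereS d t ↔ x ∈ sphereS d t := by
  simp only [mem_sphereS, Function.comp_apply, Equiv.sum_comp σ (fun i => |x i|)]
  exact and_congr_left' (σ.forall_congr fun {_} => Iff.rfl)

lemma sum_abs_apply_sphereS_eq {d t : ℕ} (i j : Fin d) :
    ∑ x ∈ sphereS d t, |x i| = ∑ x ∈ sphereS d t, |x j| := by
  refine sum_nbij' (· ∘ Equiv.swap i j) (· ∘ Equiv.swap i j)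
    (fun _ hx => (comp_perm_mem_sphereS _).2 hx) (fun _ hx => (comp_perm_mem_sphereS _).2 hx)
    (fun _ _ => by ext; simp) (fun _ _ => by ext; simp) (fun _ _ => by simp)

lemma dim_mul_sum_abs_apply_sphereS {d t : ℕ} (i : Fin d) :
    (d : ℤ) * ∑ x ∈ sphereS d t, |x i| = #(sphereS d t) * t := by
  calc (d : ℤ) * ∑ x ∈ sphereS d t, |x i| = ∑ j : Fin d, ∑ x ∈ sphereS d t, |x j| := by
        simp [sum_abs_apply_sphereS_eq _ i]
    _ = ∑ x ∈ sphereS d t, ∑ j, |x j| := sum_comm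
    _ = #(sphereS d t) * t := by
        rw [sum_congr rfl fun x hx => (mem_sphereS.1 hx).2]
        simp

lemma sum_sum_abs_sphereS {d t : ℕ} (W : Finset (Fin d)) :
    ((∑ x ∈ sphereS d t, ∑ i ∈ W, |x i| : ℤ) : ℝ) = #W * (#(sphereS d t) * t / d) := by
  have hcoord (i : Fin d) :
      ((∑ x ∈ sphereS d t, |x i| : ℤ) : ℝ) = #(sphereS d t) * t / d := by
    rw [eq_div_iff (by exact_mod_cast i.pos.ne'), mul_comm]
    exact_mod_cast dim_mul_sum_abs_apply_sphereS i
  rw [sum_comm, Int.cast_sum, sum_congr rfl fun i _ => hcoord i, sum_const, nsmul_eq_mul]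

lemma card_compl_Vset_le (d : ℕ) (ξ : Fin d → ℝ) :
    (#(Vset d ξ)ᶜ : ℝ) ≤ 2 * ∑ i, Real.cos (Real.pi * ξ i) ^ 2 := by
  calc (#(Vset d ξ)ᶜ : ℝ) = 2 * ∑ _i ∈ (Vset d ξ)ᶜ, (1 / 2 : ℝ) := by simp; ring
    _ ≤ 2 * ∑ i ∈ (Vset d ξ)ᶜ, Real.cos (Real.pi * ξ i) ^ 2 := by
        gcongr with i hi
        have hcos : 0 ≤ Real.cos (2 * (Real.pi * ξ i)) := by simpa [Vset, mul_assoc] using hi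
        rw [Real.cos_two_mul] at hcos
        linarith
    _ ≤ 2 * ∑ i, Real.cos (Real.pi * ξ i) ^ 2 := by
        gcongr
        exact subset_univ _

theorem signed_sums_diff_bound_general (d t : ℕ) (ξ : Fin d → ℝ) :
    |((sphereS d t).card : ℝ)⁻¹ * (∑ x ∈ sphereS d t, (-1 : ℝ) ^ (∑ i ∈ Vset d ξ, x i)) -
        ((sphereS d t).card : ℝ)⁻¹ * (∑ x ∈ sphereS d t, (-1 : ℝ) ^ (∑ i, x i))| ≤
      4 * ((t : ℝ) / d) * ∑ i, Real.cos (Real.pi * ξ i) ^ 2 := by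
  set S := sphereS d t
  set V := Vset d ξ
  have hcard : (#S : ℝ)⁻¹ * #S ≤ 1 := inv_mul_le_one_of_le₀ le_rfl (Nat.cast_nonneg _)
  calc |(#S : ℝ)⁻¹ * (∑ x ∈ S, (-1 : ℝ) ^ (∑ i ∈ V, x i)) -
        (#S : ℝ)⁻¹ * (∑ x ∈ S, (-1 : ℝ) ^ (∑ i, x i))|
      = (#S : ℝ)⁻¹ * |∑ x ∈ S, ((-1 : ℝ) ^ (∑ i ∈ V, x i) - (-1 : ℝ) ^ (∑ i, x i))| := by
        rw [← mul_sub, abs_mul, abs_inv, Nat.abs_cast, sum_sub_distrib]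
    _ ≤ (#S : ℝ)⁻¹ * ∑ x ∈ S, 2 * ((∑ i ∈ Vᶜ, |x i| : ℤ) : ℝ) := by
        gcongr
        exact (abs_sum_le_sum_abs _ _).trans
          (sum_le_sum fun x _ => abs_neg_one_zpow_sum_sub_le V x)
    _ = 2 * (t / d) * #Vᶜ * ((#S : ℝ)⁻¹ * #S) := by
        rw [← mul_sum, ← Int.cast_sum, sum_sum_abs_sphereS]
        ring
    _ ≤ 2 * (t / d) * (2 * ∑ i, Real.cos (Real.pi * ξ i) ^ 2) := by
        grw [hcard, mul_one, card_compl_Vset_le]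
    _ = 4 * ((t : ℝ) / d) * ∑ i, Real.cos (Real.pi * ξ i) ^ 2 := by ring

/-- Lemma 4.6: for `1 ≤ t ≤ d` and every `ξ ∈ 𝕋^d`,
`| |S_t|⁻¹ Σ_{x ∈ S_t} (-1)^{Σ_{i ∈ V_ξ} x_i} - |S_t|⁻¹ Σ_{x ∈ S_t} (-1)^{Σ_{i=1}^d x_i} |
  ≤ 4 (t/d) Σ cos²(π ξ_i)`. -/
theorem signed_sums_diff_bound (d t : ℕ) (ht0 : 1 ≤ t) (ht : t ≤ d) (ξ : Fin d → ℝ) :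
    |((sphereS d t).card : ℝ)⁻¹ * (∑ x ∈ sphereS d t, (-1 : ℝ) ^ (∑ i ∈ Vset d ξ, x i)) -
        ((sphereS d t).card : ℝ)⁻¹ * (∑ x ∈ sphereS d t, (-1 : ℝ) ^ (∑ i, x i))| ≤
      4 * ((t : ℝ) / d) * ∑ i, Real.cos (Real.pi * ξ i) ^ 2 :=
  signed_sums_diff_bound_general d t ξ
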